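/- Let X ⊆ ℝ be measurable of finite length, u, v ∈ L¹(X) with u★ ≤ v★ on [0,|X|] and ∫_X u dx = ∫_X v dx. Then ess sup u ≤ ess sup v, ess inf v ≤ ess inf u, and osc u ≤ osc v, where osc = ess sup − ess inf. -/

import Mathlib

/-!
If `ess sup u > c > a > ess sup v`, the set `A = {u > c}` has positive measure `t`, and
`c t ≤ ∫_A u ≤ u★(t) ≤ v★(t) ≤ a t`, so `c ≤ a`. Dually, if `ess inf u < b < b' < ess inf v`,
let `A = {u < b}` have measure `t`; comparing the star functions at `|X| - t`, realised by `X \ A`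
for `u`, gives `∫_X u - b t ≤ ∫_X v - b' t`, and the equality of the integrals forces `b' ≤ b`.
-/

open Real MeasureTheory Set

noncomputable section

/-- The star function of `f` on a measurable set `X ⊆ ℝ`. -/
def starFn (X : Set ℝ) (f : ℝ → ℝ) (t : ℝ) : ℝ :=
  sSup {r : ℝ | ∃ E : Set ℝ, E ⊆ X ∧ MeasurableSet E ∧
    (volume E).toReal = t ∧ r = ∫ x in E, f x}

section MeasureSpace

variable {α : Type*} [MeasurableSpace α] {μ : Measure α} {X : Set α} {f : α → ℝ}

lemma exists_subset_ae_lt_of_lt_essSup (hX : MeasurableSet X) (hf : AEMeasurable f (μ.restrict X))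
    {c : ℝ} (hc : (c : EReal) < essSup (fun x => (f x : EReal)) (μ.restrict X)) :
    ∃ A ⊆ X, MeasurableSet A ∧ μ A ≠ 0 ∧ ∀ᵐ x ∂μ.restrict A, c < f x := by
  obtain ⟨g, hg, hfg⟩ := hf
  refine ⟨{x | c < g x} ∩ X, inter_subset_right,
    (measurableSet_lt measurable_const hg).inter hX, fun hA => hc.not_ge ?_, ?_⟩
  · have hgc : ∀ᵐ x ∂μ.restrict X, g x ≤ c := by
      rw [ae_iff, Measure.restrict_apply' hX]
      simpa only [not_le] using hA
    refine essSup_le_of_ae_le _ ?_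
    filter_upwards [hgc, hfg] with x hx hfx
    exact EReal.coe_le_coe_iff.mpr (hfx ▸ hx)
  · filter_upwards [ae_restrict_of_ae_restrict_of_subset inter_subset_right hfg,
      ae_restrict_mem ((measurableSet_lt measurable_const hg).inter hX)] with x hfx hx
    exact hfx ▸ hx.1

lemma exists_subset_ae_lt_of_essInf_lt (hX : MeasurableSet X) (hf : AEMeasurable f (μ.restrict X))
    {b : ℝ} (hb : essInf (fun x => (f x : EReal)) (μ.restrict X) < b) :
    ∃ A ⊆ X, MeasurableSet A ∧ μ A ≠ 0 ∧ ∀ᵐ x ∂μ.restrict A, f x < b := by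
  obtain ⟨g, hg, hfg⟩ := hf
  refine ⟨{x | g x < b} ∩ X, inter_subset_right,
    (measurableSet_lt hg measurable_const).inter hX, fun hA => hb.not_ge ?_, ?_⟩
  · have hgb : ∀ᵐ x ∂μ.restrict X, b ≤ g x := by
      rw [ae_iff, Measure.restrict_apply' hX]
      simpa only [not_le] using hA
    refine le_essInf_of_ae_le _ ?_
    filter_upwards [hgb, hfg] with x hx hfx
    exact EReal.coe_le_coe_iff.mpr (hfx ▸ hx)
  · filter_upwards [ae_restrict_of_ae_restrict_of_subset inter_subset_right hfg,
      ae_restrict_mem ((measurableSet_lt hg measurable_const).inter hX)] with x hfx hx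
    exact hfx ▸ hx.1

lemma mul_measureReal_le_setIntegral {s : Set α} (hs : μ s ≠ ⊤) (hf : IntegrableOn f s μ) {c : ℝ}
    (hcf : ∀ᵐ x ∂μ.restrict s, c ≤ f x) : c * μ.real s ≤ ∫ x in s, f x ∂μ := by
  simpa only [setIntegral_const, smul_eq_mul, mul_comm] using
    integral_mono_ae (integrableOn_const (C := c) hs) hf hcf

lemma setIntegral_le_mul_measureReal {s : Set α} (hs : μ s ≠ ⊤) (hf : IntegrableOn f s μ) {c : ℝ}
    (hfc : ∀ᵐ x ∂μ.restrict s, f x ≤ c) : ∫ x in s, f x ∂μ ≤ c * μ.real s := by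
  simpa only [setIntegral_const, smul_eq_mul, mul_comm] using
    integral_mono_ae hf (integrableOn_const (C := c) hs) hfc

end MeasureSpace

section StarFunction

variable {X : Set ℝ} {f : ℝ → ℝ}

lemma toReal_volume_mem_Icc (hXfin : volume X < ⊤) {E : Set ℝ} (hEX : E ⊆ X) :
    (volume E).toReal ∈ Icc 0 (volume X).toReal :=
  ⟨ENNReal.toReal_nonneg, ENNReal.toReal_mono hXfin.ne (measure_mono hEX)⟩

lemma setIntegral_le_starFn (hf : IntegrableOn f X) {E : Set ℝ} (hEX : E ⊆ X)
    (hE : MeasurableSet E) : ∫ x in E, f x ≤ starFn X f (volume E).toReal := by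
  refine le_csSup ⟨∫ x in X, |f x|, ?_⟩ ⟨E, hEX, hE, rfl, rfl⟩
  rintro r ⟨F, hFX, -, -, rfl⟩
  calc ∫ x in F, f x ≤ ∫ x in F, |f x| :=
        integral_mono (hf.mono_set hFX) (hf.mono_set hFX).abs fun x => le_abs_self _
    _ ≤ ∫ x in X, |f x| :=
        setIntegral_mono_set hf.abs (.of_forall fun x => abs_nonneg _) hFX.eventuallyLE

lemma starFn_le_of_forall_setIntegral_le {t b : ℝ}
    (hne : ∃ E ⊆ X, MeasurableSet E ∧ (volume E).toReal = t)
    (hb : ∀ E ⊆ X, MeasurableSet E → (volume E).toReal = t → ∫ x in E, f x ≤ b) :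
    starFn X f t ≤ b := by
  obtain ⟨E, hEX, hE, hEt⟩ := hne
  refine csSup_le ⟨_, E, hEX, hE, hEt, rfl⟩ ?_
  rintro r ⟨F, hFX, hF, hFt, rfl⟩
  exact hb F hFX hF hFt

variable (hXfin : volume X < ⊤) (hf : IntegrableOn f X)
include hXfin hf

lemma starFn_le_mul_of_ae_le {a : ℝ} (hfa : ∀ᵐ x ∂volume.restrict X, f x ≤ a) {E : Set ℝ}
    (hEX : E ⊆ X) (hE : MeasurableSet E) :
    starFn X f (volume E).toReal ≤ a * (volume E).toReal := by
  refine starFn_le_of_forall_setIntegral_le ⟨E, hEX, hE, rfl⟩ fun F hFX hF hFt => ?_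
  rw [← hFt]
  exact setIntegral_le_mul_measureReal (measure_ne_top_of_subset hFX hXfin.ne) (hf.mono_set hFX)
    (ae_restrict_of_ae_restrict_of_subset hFX hfa)

lemma starFn_sdiff_le_integral_sub_mul (hX : MeasurableSet X) {b : ℝ}
    (hfb : ∀ᵐ x ∂volume.restrict X, b ≤ f x) {A : Set ℝ} (hAX : A ⊆ X) (hA : MeasurableSet A) :
    starFn X f (volume (X \ A)).toReal ≤ (∫ x in X, f x) - b * (volume A).toReal := by
  refine starFn_le_of_forall_setIntegral_le ⟨X \ A, sdiff_subset, hX.diff hA, rfl⟩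
    fun E hEX hE hEt => ?_
  have hcompl : (volume (X \ E)).toReal = (volume A).toReal := by
    rw [← measureReal_def, measureReal_sdiff hEX hE hXfin.ne, measureReal_def _ E, hEt,
      ← measureReal_def, measureReal_sdiff hAX hA hXfin.ne, sub_sub_cancel, measureReal_def]
  have hlow : b * (volume A).toReal ≤ ∫ x in X \ E, f x := hcompl ▸
    mul_measureReal_le_setIntegral (measure_ne_top_of_subset sdiff_subset hXfin.ne)
      (hf.mono_set sdiff_subset) (ae_restrict_of_ae_restrict_of_subset sdiff_subset hfb)
  linarith [setIntegral_sdiff hE hf hEX]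

end StarFunction

section Comparison

variable {X : Set ℝ} (hX : MeasurableSet X) (hXfin : volume X < ⊤) {u v : ℝ → ℝ}
  (hu : IntegrableOn u X) (hv : IntegrableOn v X)
  (hstar : ∀ t ∈ Icc 0 (volume X).toReal, starFn X u t ≤ starFn X v t)
include hX hXfin hu hv hstar

lemma essSup_le_essSup_of_starFn_le :
    essSup (fun x => (u x : EReal)) (volume.restrict X) ≤
      essSup (fun x => (v x : EReal)) (volume.restrict X) := by
  by_contra! hlt
  obtain ⟨c, hvc, hcu⟩ := EReal.exists_between_coe_real hlt
  obtain ⟨a, hva, hac⟩ := EReal.exists_between_coe_real hvc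
  have hva' : ∀ᵐ x ∂volume.restrict X, v x ≤ a := by
    filter_upwards [ae_lt_of_essSup_lt hva] with x hx
    exact_mod_cast hx.le
  obtain ⟨A, hAX, hA, hA0, hcA⟩ :=
    exists_subset_ae_lt_of_lt_essSup hX hu.aestronglyMeasurable.aemeasurable hcu
  have hApos : 0 < (volume A).toReal :=
    ENNReal.toReal_pos hA0 (measure_ne_top_of_subset hAX hXfin.ne)
  have hca : c * (volume A).toReal ≤ a * (volume A).toReal :=
    calc c * (volume A).toReal ≤ ∫ x in A, u x :=
          mul_measureReal_le_setIntegral (measure_ne_top_of_subset hAX hXfin.ne) (hu.mono_set hAX)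
            (hcA.mono fun _ => le_of_lt)
      _ ≤ starFn X u (volume A).toReal := setIntegral_le_starFn hu hAX hA
      _ ≤ starFn X v (volume A).toReal := hstar _ (toReal_volume_mem_Icc hXfin hAX)
      _ ≤ a * (volume A).toReal := starFn_le_mul_of_ae_le hXfin hv hva' hAX hA
  exact hac.not_ge (EReal.coe_le_coe_iff.mpr (le_of_mul_le_mul_right hca hApos))

lemma essInf_le_essInf_of_starFn_le (hmean : (∫ x in X, u x) = ∫ x in X, v x) :
    essInf (fun x => (v x : EReal)) (volume.restrict X) ≤
      essInf (fun x => (u x : EReal)) (volume.restrict X) := by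
  by_contra! hlt
  obtain ⟨b, hub, hbv⟩ := EReal.exists_between_coe_real hlt
  obtain ⟨b', hbb', hb'v⟩ := EReal.exists_between_coe_real hbv
  have hvb' : ∀ᵐ x ∂volume.restrict X, b' ≤ v x := by
    filter_upwards [ae_lt_of_lt_essInf hb'v] with x hx
    exact_mod_cast hx.le
  obtain ⟨A, hAX, hA, hA0, hAb⟩ :=
    exists_subset_ae_lt_of_essInf_lt hX hu.aestronglyMeasurable.aemeasurable hub
  have hApos : 0 < (volume A).toReal :=
    ENNReal.toReal_pos hA0 (measure_ne_top_of_subset hAX hXfin.ne)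
  have hAu : ∫ x in A, u x ≤ b * (volume A).toReal :=
    setIntegral_le_mul_measureReal (measure_ne_top_of_subset hAX hXfin.ne) (hu.mono_set hAX)
      (hAb.mono fun _ => le_of_lt)
  have hbb : (∫ x in X, u x) - b * (volume A).toReal ≤ (∫ x in X, v x) - b' * (volume A).toReal :=
    calc (∫ x in X, u x) - b * (volume A).toReal ≤ ∫ x in X \ A, u x := by
          rw [setIntegral_sdiff hA hu hAX]; linarith
      _ ≤ starFn X u (volume (X \ A)).toReal := setIntegral_le_starFn hu sdiff_subset (hX.diff hA)
      _ ≤ starFn X v (volume (X \ A)).toReal := hstar _ (toReal_volume_mem_Icc hXfin sdiff_subset)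
      _ ≤ (∫ x in X, v x) - b' * (volume A).toReal :=
          starFn_sdiff_le_integral_sub_mul hXfin hv hX hvb' hAX hA
  rw [hmean] at hbb
  exact hbb'.not_ge (EReal.coe_le_coe_iff.mpr (le_of_mul_le_mul_right (by linarith) hApos))

end Comparison

theorem essSup_essInf_osc_comparison (X : Set ℝ) (hX : MeasurableSet X)
    (hXfin : volume X < ⊤) (u v : ℝ → ℝ)
    (hu : IntegrableOn u X) (hv : IntegrableOn v X)
    (hstar : ∀ t ∈ Icc 0 (volume X).toReal, starFn X u t ≤ starFn X v t)
    (hmean : (∫ x in X, u x) = ∫ x in X, v x) :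
    essSup (fun x => (u x : EReal)) (volume.restrict X) ≤
      essSup (fun x => (v x : EReal)) (volume.restrict X) ∧
    essInf (fun x => (v x : EReal)) (volume.restrict X) ≤
      essInf (fun x => (u x : EReal)) (volume.restrict X) ∧
    essSup (fun x => (u x : EReal)) (volume.restrict X) -
        essInf (fun x => (u x : EReal)) (volume.restrict X) ≤
      essSup (fun x => (v x : EReal)) (volume.restrict X) -
        essInf (fun x => (v x : EReal)) (volume.restrict X) := by
  have hsup := essSup_le_essSup_of_starFn_le hX hXfin hu hv hstar
  have hinf := essInf_le_essInf_of_starFn_le hX hXfin hu hv hstar hmean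
  exact ⟨hsup, hinf, EReal.sub_le_sub hsup hinf⟩
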